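/- arXiv:1811.12057 — 6 statements merged into one kernel-verified Lean document; each statement's English description precedes it below -/
import Mathlib

section
/- Let κ ≥ 0, λ1, λ2 ∈ ℝ, and let v, m, y : [0,1] → ℝ be twice continuously differentiable with |y'(t)| < 1 for all t ∈ [0,1]. Suppose that on [0,1] the functions satisfy v' = −λ1 y, m' = −v √(1−(y')²) − λ2 y', and m − κ m'' = y''/√(1−(y')²). Then for all t ∈ [0,1], m(t) = (1 + κ v(t) y'(t) − κ λ2 √(1−y'(t)²)) · y''(t)/√(1−y'(t)²) + κ λ1 y(t) √(1−y'(t)²). -/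
open Set

/-! Differentiating the second equilibrium equation and eliminating `v'` with the first gives
`m'' = λ₁ y √(1 - y'²) + v y' y'' / √(1 - y'²) - λ₂ y''`; substituting this into the
constitutive law `m = y'' / √(1 - y'²) + κ m''` is the claimed formula. Because `m` is `C²`,
`m''(t)` may be computed from the second equation on `[0, 1]` alone, endpoints included. -/

theorem UniqueDiffWithinAt.deriv_eq_of_eqOn {𝕜 F : Type*} [NontriviallyNormedField 𝕜]
    [NormedAddCommGroup F] [NormedSpace 𝕜 F] {f g : 𝕜 → F} {g' : F} {s : Set 𝕜} {x : 𝕜}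
    (hs : UniqueDiffWithinAt 𝕜 s x) (hx : x ∈ s) (hfg : EqOn f g s)
    (hf : DifferentiableAt 𝕜 f x) (hg : HasDerivWithinAt g g' s x) :
    deriv f x = g' :=
  hs.eq_deriv s hf.hasDerivAt.hasDerivWithinAt (hg.congr_of_mem hfg hx)

theorem HasDerivAt.sqrt_one_sub_sq {p : ℝ → ℝ} {p' x : ℝ} (hp : HasDerivAt p p' x)
    (hx : 1 - p x ^ 2 ≠ 0) :
    HasDerivAt (fun u => √(1 - p u ^ 2)) (-(p x * p') / √(1 - p x ^ 2)) x := by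
  convert ((hp.fun_pow 2).const_sub 1).sqrt hx using 1
  field_simp
  ring

theorem deriv_deriv_moment {l1 l2 t : ℝ} {v m y : ℝ → ℝ} {s : Set ℝ}
    (hs : UniqueDiffWithinAt ℝ s t) (ht : t ∈ s)
    (hv : DifferentiableAt ℝ v t) (hm : DifferentiableAt ℝ (deriv m) t)
    (hy : DifferentiableAt ℝ (deriv y) t) (hyt : 1 - deriv y t ^ 2 ≠ 0)
    (e1 : deriv v t = -l1 * y t)
    (e2 : ∀ u ∈ s, deriv m u = -v u * √(1 - deriv y u ^ 2) - l2 * deriv y u) :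
    deriv (deriv m) t = l1 * y t * √(1 - deriv y t ^ 2)
      + v t * deriv y t * deriv (deriv y) t / √(1 - deriv y t ^ 2)
      - l2 * deriv (deriv y) t := by
  have hsqrt := hy.hasDerivAt.sqrt_one_sub_sq hyt
  have hrhs := (hv.hasDerivAt.neg.mul hsqrt).sub (hy.hasDerivAt.const_mul l2)
  rw [hs.deriv_eq_of_eqOn ht e2 hm hrhs.hasDerivWithinAt, e1, Pi.neg_apply]
  ring

theorem stmt0_general (κ l1 l2 : ℝ)
    (v m y : ℝ → ℝ)
    (hv : ContDiff ℝ 2 v) (hm : ContDiff ℝ 2 m) (hy : ContDiff ℝ 2 y)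
    (hy' : ∀ t ∈ Icc (0:ℝ) 1, |deriv y t| < 1)
    (e1 : ∀ t ∈ Icc (0:ℝ) 1, deriv v t = -l1 * y t)
    (e2 : ∀ t ∈ Icc (0:ℝ) 1,
      deriv m t = -v t * Real.sqrt (1 - (deriv y t) ^ 2) - l2 * deriv y t)
    (e3 : ∀ t ∈ Icc (0:ℝ) 1,
      m t - κ * deriv (deriv m) t
        = deriv (deriv y) t / Real.sqrt (1 - (deriv y t) ^ 2)) :
    ∀ t ∈ Icc (0:ℝ) 1,
      m t = (1 + κ * v t * deriv y t - κ * l2 * Real.sqrt (1 - (deriv y t) ^ 2)) *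
              (deriv (deriv y) t / Real.sqrt (1 - (deriv y t) ^ 2))
            + κ * l1 * y t * Real.sqrt (1 - (deriv y t) ^ 2) := by
  intro t ht
  have hpos : 0 < 1 - deriv y t ^ 2 := sub_pos.mpr ((sq_lt_one_iff_abs_lt_one _).mpr (hy' t ht))
  have hsqrt : √(1 - deriv y t ^ 2) ≠ 0 := (Real.sqrt_pos.mpr hpos).ne'
  have hm'' := deriv_deriv_moment (uniqueDiffOn_Icc zero_lt_one t ht) ht
    (hv.differentiable two_ne_zero t) (hm.differentiable_deriv_two t)
    (hy.differentiable_deriv_two t) hpos.ne' (e1 t ht) e2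
  rw [eq_add_of_sub_eq' (e3 t ht), hm'']
  field_simp
  ring

/-- reduction of the equilibrium system of a rotating axially
compressed non-local rod to an explicit formula for the bending moment. -/
theorem stmt0 (κ l1 l2 : ℝ) (hκ : 0 ≤ κ)
    (v m y : ℝ → ℝ)
    (hv : ContDiff ℝ 2 v) (hm : ContDiff ℝ 2 m) (hy : ContDiff ℝ 2 y)
    (hy' : ∀ t ∈ Icc (0:ℝ) 1, |deriv y t| < 1)
    (e1 : ∀ t ∈ Icc (0:ℝ) 1, deriv v t = -l1 * y t)
    (e2 : ∀ t ∈ Icc (0:ℝ) 1,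
      deriv m t = -v t * Real.sqrt (1 - (deriv y t) ^ 2) - l2 * deriv y t)
    (e3 : ∀ t ∈ Icc (0:ℝ) 1,
      m t - κ * deriv (deriv m) t
        = deriv (deriv y) t / Real.sqrt (1 - (deriv y t) ^ 2)) :
    ∀ t ∈ Icc (0:ℝ) 1,
      m t = (1 + κ * v t * deriv y t - κ * l2 * Real.sqrt (1 - (deriv y t) ^ 2)) *
              (deriv (deriv y) t / Real.sqrt (1 - (deriv y t) ^ 2))
            + κ * l1 * y t * Real.sqrt (1 - (deriv y t) ^ 2) :=
  stmt0_general κ l1 l2 v m y hv hm hy hy' e1 e2 e3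
end

section
/- Let κ ≥ 0, λ1, λ2 ∈ ℝ, and let v, m, y : [0,1] → ℝ be twice continuously differentiable with |y'(t)| < 1 for all t ∈ [0,1]. Suppose that on [0,1]: v' = −λ1 y, m' = −v √(1−(y')²) − λ2 y', m − κ m'' = y''/√(1−(y')²), together with v(1) = 0 and m(1) = 0, and suppose 1 + κ λ1 y'(t) I₁y(t) − κ λ2 √(1−y'(t)²) ≠ 0 for all t. Then y satisfies M²(λ, y)(t) = 0 for all t ∈ [0,1]. -/
/-! Integrating `v' = -λ₁ y` and `m' = -v √(1 - y'²) - λ₂ y'` from `t` to `1` with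
`v(1) = m(1) = 0` gives `v = λ₁ I₁y` and `m = λ₁ J₂y + λ₂ I₁y'`, while differentiating the second
equation expresses `m''` through `y, y', y''`. Substituting both into `m - κ m'' = y''/√(1 - y'²)`
leaves an equation linear in `y''` whose coefficient is the denominator of `M²`; solving it for
`y''` is `M²(λ, y) = 0`. -/

open Set MeasureTheory

/-- `I₁ z (t) = ∫_t^1 z(τ) dτ`. -/
noncomputable def I1 (z : ℝ → ℝ) (t : ℝ) : ℝ := ∫ τ in t..(1:ℝ), z τ

/-- `J₂ y (t) = ∫_t^1 ∫_τ^1 y(η) √(1 − y'(τ)²) dη dτ`. -/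
noncomputable def J2 (y : ℝ → ℝ) (t : ℝ) : ℝ :=
  ∫ τ in t..(1:ℝ), ∫ η in τ..(1:ℝ), y η * Real.sqrt (1 - (deriv y τ) ^ 2)

/-- The non-linear integro-differential operator `M²(λ, y)`. -/
noncomputable def M2 (κ l1 l2 : ℝ) (y : ℝ → ℝ) (t : ℝ) : ℝ :=
  deriv (deriv y) t - Real.sqrt (1 - (deriv y t) ^ 2) *
    ((l1 * (J2 y t - κ * y t * Real.sqrt (1 - (deriv y t) ^ 2)) + l2 * I1 (deriv y) t) /
     (1 + κ * l1 * deriv y t * I1 y t - κ * l2 * Real.sqrt (1 - (deriv y t) ^ 2)))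

theorem HasDerivAt.sqrt_one_sub_sq_s1 {u : ℝ → ℝ} {u' t : ℝ} (hu : HasDerivAt u u' t)
    (ht : |u t| < 1) :
    HasDerivAt (fun τ => Real.sqrt (1 - u τ ^ 2)) (-(u t * u') / Real.sqrt (1 - u t ^ 2)) t := by
  have hpos : 0 < 1 - u t ^ 2 := by
    have := (sq_lt_one_iff_abs_lt_one _).mpr ht
    linarith
  refine (((hasDerivAt_const t 1).sub (hu.pow 2)).sqrt hpos.ne').congr_deriv ?_
  simp only [Pi.sub_apply, Pi.pow_apply]
  field_simp
  push_cast
  ring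

theorem eq_sub_intervalIntegral_of_deriv_eqOn {f g : ℝ → ℝ} {a b : ℝ}
    (hf : Differentiable ℝ f) (hg : IntervalIntegrable g volume a b)
    (h : EqOn (deriv f) g (uIcc a b)) :
    f a = f b - ∫ x in a..b, g x := by
  have := intervalIntegral.integral_eq_sub_of_hasDerivAt
    (fun x hx => h hx ▸ (hf x).hasDerivAt) hg
  linarith

theorem deriv_eq_of_eqOn_Icc {f g : ℝ → ℝ} {g' a b t : ℝ} (hab : a < b) (ht : t ∈ Icc a b)
    (hf : DifferentiableAt ℝ f t) (hg : HasDerivAt g g' t) (hfg : EqOn f g (Icc a b)) :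
    deriv f t = g' :=
  (uniqueDiffOn_Icc hab t ht).eq_deriv _ hf.hasDerivAt.hasDerivWithinAt
    (hg.hasDerivWithinAt.congr (fun _ hx => hfg hx) (hfg ht))

theorem J2_eq_integral_I1_mul (y : ℝ → ℝ) (t : ℝ) :
    J2 y t = ∫ τ in t..1, I1 y τ * Real.sqrt (1 - deriv y τ ^ 2) :=
  intervalIntegral.integral_congr fun _ _ => intervalIntegral.integral_mul_const _ _

theorem eq_mul_I1_of_deriv_eqOn {f y : ℝ → ℝ} {c : ℝ} (hf : Differentiable ℝ f)
    (hy : Continuous y) (hf1 : f 1 = 0) (h : ∀ t ∈ Icc (0:ℝ) 1, deriv f t = -c * y t) :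
    ∀ t ∈ Icc (0:ℝ) 1, f t = c * I1 y t := by
  intro t ht
  rw [eq_sub_intervalIntegral_of_deriv_eqOn hf ((hy.const_mul (-c)).intervalIntegrable t 1)
    fun τ hτ => h τ (uIcc_subset_Icc ht (right_mem_Icc.2 zero_le_one) hτ), hf1, intervalIntegral.integral_const_mul, I1]
  ring

theorem eq_J2_add_I1_of_deriv_eqOn {m v y : ℝ → ℝ} {l1 l2 : ℝ} (hm : Differentiable ℝ m)
    (hv : Continuous v) (hy : Continuous (deriv y)) (hm1 : m 1 = 0)
    (hvy : ∀ t ∈ Icc (0:ℝ) 1, v t = l1 * I1 y t)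
    (h : ∀ t ∈ Icc (0:ℝ) 1, deriv m t = -v t * Real.sqrt (1 - deriv y t ^ 2) - l2 * deriv y t) :
    ∀ t ∈ Icc (0:ℝ) 1, m t = l1 * J2 y t + l2 * I1 (deriv y) t := by
  intro t ht
  have hvs : Continuous fun τ => v τ * Real.sqrt (1 - deriv y τ ^ 2) := by fun_prop
  have hsub := uIcc_subset_Icc ht (right_mem_Icc.2 zero_le_one)
  have hvJ2 : ∫ τ in t..1, v τ * Real.sqrt (1 - deriv y τ ^ 2) = l1 * J2 y t := by
    rw [J2_eq_integral_I1_mul, ← intervalIntegral.integral_const_mul]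
    refine intervalIntegral.integral_congr fun τ hτ => ?_
    rw [hvy τ (hsub hτ), mul_assoc]
  have hg : Continuous fun τ => -(v τ * Real.sqrt (1 - deriv y τ ^ 2)) - l2 * deriv y τ := by
    fun_prop
  rw [eq_sub_intervalIntegral_of_deriv_eqOn hm (hg.intervalIntegrable t 1)
    fun τ hτ => (h τ (hsub hτ)).trans (by ring),
    intervalIntegral.integral_sub (f := fun τ => -(v τ * Real.sqrt (1 - deriv y τ ^ 2)))
      (g := fun τ => l2 * deriv y τ) (hvs.intervalIntegrable t 1).neg
      ((hy.intervalIntegrable t 1).const_mul l2),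
    intervalIntegral.integral_neg, intervalIntegral.integral_const_mul, hvJ2, hm1, I1]
  ring

theorem deriv_deriv_eq_of_deriv_eqOn {m v y : ℝ → ℝ} {l2 t : ℝ} (hm : ContDiff ℝ 2 m)
    (hv : Differentiable ℝ v) (hy : ContDiff ℝ 2 y) (ht : t ∈ Icc (0:ℝ) 1)
    (hy' : |deriv y t| < 1)
    (h : ∀ t ∈ Icc (0:ℝ) 1, deriv m t = -v t * Real.sqrt (1 - deriv y t ^ 2) - l2 * deriv y t) :
    deriv (deriv m) t = -deriv v t * Real.sqrt (1 - deriv y t ^ 2)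
      + v t * (deriv y t * deriv (deriv y) t) / Real.sqrt (1 - deriv y t ^ 2)
      - l2 * deriv (deriv y) t := by
  have hy'' := (hy.differentiable_deriv_two t).hasDerivAt
  refine (deriv_eq_of_eqOn_Icc zero_lt_one ht (hm.differentiable_deriv_two t)
    (((hv t).hasDerivAt.neg.mul (hy''.sqrt_one_sub_sq_s1 hy')).sub (hy''.const_mul l2)) h).trans ?_
  simp only [Pi.neg_apply]
  ring

theorem stmt1_general (κ l1 l2 : ℝ)
    (v m y : ℝ → ℝ)
    (hv : ContDiff ℝ 2 v) (hm : ContDiff ℝ 2 m) (hy : ContDiff ℝ 2 y)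
    (hy' : ∀ t ∈ Icc (0:ℝ) 1, |deriv y t| < 1)
    (e1 : ∀ t ∈ Icc (0:ℝ) 1, deriv v t = -l1 * y t)
    (e2 : ∀ t ∈ Icc (0:ℝ) 1,
      deriv m t = -v t * Real.sqrt (1 - (deriv y t) ^ 2) - l2 * deriv y t)
    (e3 : ∀ t ∈ Icc (0:ℝ) 1,
      m t - κ * deriv (deriv m) t
        = deriv (deriv y) t / Real.sqrt (1 - (deriv y t) ^ 2))
    (hv1 : v 1 = 0) (hm1 : m 1 = 0)
    (hden : ∀ t ∈ Icc (0:ℝ) 1,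
      1 + κ * l1 * deriv y t * I1 y t - κ * l2 * Real.sqrt (1 - (deriv y t) ^ 2) ≠ 0) :
    ∀ t ∈ Icc (0:ℝ) 1, M2 κ l1 l2 y t = 0 := by
  intro t ht
  have hs : Real.sqrt (1 - deriv y t ^ 2) ≠ 0 := by
    have := (sq_lt_one_iff_abs_lt_one _).mpr (hy' t ht)
    positivity
  have hv_eq := eq_mul_I1_of_deriv_eqOn (hv.differentiable (by norm_num)) hy.continuous hv1 e1
  have hm_eq := eq_J2_add_I1_of_deriv_eqOn (hm.differentiable (by norm_num)) hv.continuous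
    (hy.continuous_deriv (by norm_num)) hm1 hv_eq e2 t ht
  have hm'' := deriv_deriv_eq_of_deriv_eqOn hm (hv.differentiable (by norm_num)) hy ht (hy' t ht) e2
  have E := e3 t ht
  rw [hm_eq, hm'', e1 t ht, hv_eq t ht] at E
  rw [M2, sub_eq_zero, mul_div_assoc', eq_div_iff (hden t ht)]
  field_simp at E
  linear_combination -E

/-- the equilibrium system of the perfect rotating compressed
non-local rod reduces to the single integro-differential equation `M²(λ,y) = 0`. -/
theorem stmt1 (κ l1 l2 : ℝ) (hκ : 0 ≤ κ)
    (v m y : ℝ → ℝ)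
    (hv : ContDiff ℝ 2 v) (hm : ContDiff ℝ 2 m) (hy : ContDiff ℝ 2 y)
    (hy' : ∀ t ∈ Icc (0:ℝ) 1, |deriv y t| < 1)
    (e1 : ∀ t ∈ Icc (0:ℝ) 1, deriv v t = -l1 * y t)
    (e2 : ∀ t ∈ Icc (0:ℝ) 1,
      deriv m t = -v t * Real.sqrt (1 - (deriv y t) ^ 2) - l2 * deriv y t)
    (e3 : ∀ t ∈ Icc (0:ℝ) 1,
      m t - κ * deriv (deriv m) t
        = deriv (deriv y) t / Real.sqrt (1 - (deriv y t) ^ 2))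
    (hv1 : v 1 = 0) (hm1 : m 1 = 0)
    (hden : ∀ t ∈ Icc (0:ℝ) 1,
      1 + κ * l1 * deriv y t * I1 y t - κ * l2 * Real.sqrt (1 - (deriv y t) ^ 2) ≠ 0) :
    ∀ t ∈ Icc (0:ℝ) 1, M2 κ l1 l2 y t = 0 :=
  stmt1_general κ l1 l2 v m y hv hm hy hy' e1 e2 e3 hv1 hm1 hden
end

section
/- Let κ ≥ 0 and λ = (λ1, λ2) ∈ ℝ² with 1 − κ λ2 ≠ 0, let y : [0,1] → ℝ be twice continuously differentiable, and fix t ∈ [0,1]. Then the real-valued function s ↦ M²(λ, s·y)(t), defined for s in a neighbourhood of 0 (where |s y'| < 1 and the denominator is nonzero), is differentiable at s = 0 and its derivative there equals L²(λ)y(t) = y''(t) − (λ1/(1−κλ2))(I₂y(t) − κ y(t)) − (λ2/(1−κλ2)) I₁y'(t). In other words, the linearization of the operator M² at the trivial solution y = 0 is the linear operator L²(λ). -/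
open Set

/-- `I₂ z (t) = ∫_t^1 ∫_τ^1 z(η) dη dτ`. -/
noncomputable def I2 (z : ℝ → ℝ) (t : ℝ) : ℝ :=
  ∫ τ in t..(1:ℝ), ∫ η in τ..(1:ℝ), z η

/-- The linearized operator `L²(λ)`. -/
noncomputable def L2 (κ l1 l2 : ℝ) (y : ℝ → ℝ) (t : ℝ) : ℝ :=
  deriv (deriv y) t - l1 / (1 - κ * l2) * (I2 y t - κ * y t)
    - l2 / (1 - κ * l2) * I1 (deriv y) t

/-! Replacing `y` by `s·y` multiplies `y`, `y'`, `y''`, `I₁y` by `s`, and `J₂y` by `s` up to a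
factor `√(1 - s²y'²)` under the integral. So `M²(λ, s·y)(t) = s·G(s)`, where `G` is continuous at
`0` because its denominator there is `1 - κλ₂ ≠ 0`. The derivative at `s = 0` is therefore `G(0)`,
and at `s = 0` every square root equals `1`, which leaves `L²(λ)y(t)`. -/

theorem hasDerivAt_smul_of_continuousAt {𝕜 E : Type*} [NontriviallyNormedField 𝕜]
    [NormedAddCommGroup E] [NormedSpace 𝕜 E] {F : 𝕜 → E} (hF : ContinuousAt F 0) :
    HasDerivAt (fun s => s • F s) (F 0) 0 := by
  rw [hasDerivAt_iff_tendsto_slope_zero]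
  refine (hF.tendsto.mono_left nhdsWithin_le_nhds).congr' ?_
  filter_upwards [self_mem_nhdsWithin] with s (hs : s ≠ 0)
  simp [smul_smul, hs]

theorem continuous_I1 {z : ℝ → ℝ} (hz : Continuous z) : Continuous (I1 z) := by
  have : I1 z = fun τ => -∫ η in (1:ℝ)..τ, z η := by
    funext τ
    rw [I1, intervalIntegral.integral_symm]
  rw [this]
  exact (intervalIntegral.continuous_primitive (fun a b => hz.intervalIntegrable a b) 1).neg

theorem I1_const_mul (s : ℝ) (z : ℝ → ℝ) (t : ℝ) :
    I1 (fun x => s * z x) t = s * I1 z t :=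
  intervalIntegral.integral_const_mul s z

noncomputable def J2Slope (y : ℝ → ℝ) (t s : ℝ) : ℝ :=
  ∫ τ in t..(1:ℝ), Real.sqrt (1 - (s * deriv y τ) ^ 2) * I1 y τ

theorem J2_const_mul (s : ℝ) (y : ℝ → ℝ) (t : ℝ) :
    J2 (fun x => s * y x) t = s * J2Slope y t s := by
  rw [J2, J2Slope, ← intervalIntegral.integral_const_mul, deriv_const_mul_field']
  refine intervalIntegral.integral_congr fun τ _ => ?_
  simp only [I1, ← intervalIntegral.integral_const_mul]
  congr 1 with η
  ring

theorem J2Slope_zero (y : ℝ → ℝ) (t : ℝ) : J2Slope y t 0 = I2 y t := by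
  simp [J2Slope, I2, I1]

theorem continuous_J2Slope {y : ℝ → ℝ} (hy : ContDiff ℝ 1 y) (t : ℝ) :
    Continuous (J2Slope y t) := by
  have hy' := hy.continuous_deriv le_rfl
  have hI1 := continuous_I1 hy.continuous
  unfold J2Slope
  fun_prop

noncomputable def M2Slope (κ l1 l2 : ℝ) (y : ℝ → ℝ) (t s : ℝ) : ℝ :=
  deriv (deriv y) t - Real.sqrt (1 - (s * deriv y t) ^ 2) *
    ((l1 * (J2Slope y t s - κ * y t * Real.sqrt (1 - (s * deriv y t) ^ 2))
        + l2 * I1 (deriv y) t) /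
     (1 + κ * l1 * (s * deriv y t) * (s * I1 y t)
        - κ * l2 * Real.sqrt (1 - (s * deriv y t) ^ 2)))

theorem M2_const_mul (κ l1 l2 s : ℝ) (y : ℝ → ℝ) (t : ℝ) :
    M2 κ l1 l2 (fun x => s * y x) t = s * M2Slope κ l1 l2 y t s := by
  simp only [M2, M2Slope, deriv_const_mul_field', I1_const_mul, J2_const_mul]
  ring

theorem M2Slope_zero (κ l1 l2 : ℝ) (y : ℝ → ℝ) (t : ℝ) :
    M2Slope κ l1 l2 y t 0 = L2 κ l1 l2 y t := by
  simp only [M2Slope, L2, J2Slope_zero, zero_mul, mul_zero, add_zero, sub_zero,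
    zero_pow two_ne_zero, Real.sqrt_one, one_mul, mul_one]
  ring

theorem continuousAt_M2Slope {κ l1 l2 : ℝ} (hden : 1 - κ * l2 ≠ 0) {y : ℝ → ℝ}
    (hy : ContDiff ℝ 1 y) (t : ℝ) : ContinuousAt (M2Slope κ l1 l2 y t) 0 := by
  have hJ := continuous_J2Slope hy t
  unfold M2Slope
  refine continuousAt_const.sub (ContinuousAt.mul (by fun_prop)
    (ContinuousAt.div (by fun_prop) (by fun_prop) ?_))
  simpa using hden

theorem stmt4_general (κ l1 l2 : ℝ) (hden : 1 - κ * l2 ≠ 0)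
    (y : ℝ → ℝ) (hy : ContDiff ℝ 2 y) (t : ℝ) :
    HasDerivAt (fun s : ℝ => M2 κ l1 l2 (fun x => s * y x) t) (L2 κ l1 l2 y t) 0 := by
  have h := hasDerivAt_smul_of_continuousAt (continuousAt_M2Slope (l1 := l1) hden
    (hy.of_le one_le_two) t)
  rw [M2Slope_zero] at h
  simpa only [smul_eq_mul, M2_const_mul] using h

/-- the linearization of `M²` at the trivial solution `y = 0`
is the linear operator `L²(λ)`: the function `s ↦ M²(λ, s·y)(t)` has derivative
`L²(λ)y(t)` at `s = 0`. -/
theorem stmt4 (κ l1 l2 : ℝ) (hκ : 0 ≤ κ) (hden : 1 - κ * l2 ≠ 0)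
    (y : ℝ → ℝ) (hy : ContDiff ℝ 2 y) (t : ℝ) (ht : t ∈ Icc (0:ℝ) 1) :
    HasDerivAt (fun s : ℝ => M2 κ l1 l2 (fun x => s * y x) t) (L2 κ l1 l2 y t) 0 :=
  stmt4_general κ l1 l2 hden y hy t
end

section
/- Let κ ≥ 0 and λ = (λ1, λ2) ∈ ℝ² with 1 − κ λ2 ≠ 0, and let y : [0,1] → ℝ be four times continuously differentiable with y(0) = 0 and y'(0) = 0. Then L²(λ)y(t) = 0 for all t ∈ [0,1] if and only if the following three conditions hold: L⁴(λ)y(t) = 0 for all t ∈ [0,1], y''(1)(1−κλ2) + κλ1 y(1) = 0, and y'''(1)(1−κλ2) + (κλ1+λ2) y'(1) = 0. That is, the second-order integro-differential linearized boundary-value problem and the fourth-order linearized boundary-value problem are equivalent. -/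
open Set

/-- The linearized fourth-order differential operator `L⁴(λ)`. -/
noncomputable def L4 (κ l1 l2 : ℝ) (y : ℝ → ℝ) (t : ℝ) : ℝ :=
  deriv (deriv (deriv (deriv y))) t
    + (κ * l1 + l2) / (1 - κ * l2) * deriv (deriv y) t
    - l1 / (1 - κ * l2) * y t

/-!
`L²(λ)y` is differentiable, with derivative the third-order integro-differential expression
`L³(λ)y = y''' + (λ₁(I₁y + κy') + λ₂y')/(1 - κλ₂)`, and `L³(λ)y` in turn has derivative
`L⁴(λ)y`. A function on `[0, 1]` vanishes identically iff its derivative does and it vanishes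
at `1`. Applied twice, `L²(λ)y ≡ 0` becomes `L⁴(λ)y ≡ 0` together with `L³(λ)y(1) = 0` and
`L²(λ)y(1) = 0`; since `I₁z(1) = I₂z(1) = 0`, these two values are the boundary conditions
divided by `1 - κλ₂`.
-/

theorem forall_Icc_eq_zero_iff_of_hasDerivWithinAt {E : Type*} [NormedAddCommGroup E]
    [NormedSpace ℝ E] {f f' : ℝ → E} {a b : ℝ} (hab : a < b)
    (hf : ∀ t ∈ Icc a b, HasDerivWithinAt f (f' t) (Icc a b) t) :
    (∀ t ∈ Icc a b, f t = 0) ↔ (∀ t ∈ Icc a b, f' t = 0) ∧ f b = 0 := by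
  constructor
  · intro h
    refine ⟨fun t ht => ?_, h b (right_mem_Icc.2 hab.le)⟩
    have h0 : HasDerivWithinAt f 0 (Icc a b) t :=
      (hasDerivWithinAt_const t _ 0).congr (fun x hx => h x hx) (h t ht)
    exact (uniqueDiffOn_Icc hab t ht).eq_deriv _ (hf t ht) h0
  · rintro ⟨hf', hfb⟩ t ht
    have hconst := constant_of_derivWithin_zero
      (fun x hx => (hf x hx).differentiableWithinAt) fun x hx => by
        have hx' := Ico_subset_Icc_self hx
        rw [(hf x hx').derivWithin (uniqueDiffOn_Icc hab x hx'), hf' x hx']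
    rw [hconst t ht, ← hconst b (right_mem_Icc.2 hab.le), hfb]

theorem hasDerivAt_I1 {z : ℝ → ℝ} (hz : Continuous z) (t : ℝ) :
    HasDerivAt (I1 z) (-z t) t :=
  intervalIntegral.integral_hasDerivAt_left (hz.intervalIntegrable t 1)
    (hz.stronglyMeasurableAtFilter _ _) hz.continuousAt

theorem I2_eq_I1_I1 (z : ℝ → ℝ) : I2 z = I1 (I1 z) := rfl

theorem I1_one (z : ℝ → ℝ) : I1 z 1 = 0 := intervalIntegral.integral_same

noncomputable def L3 (κ l1 l2 : ℝ) (y : ℝ → ℝ) (t : ℝ) : ℝ :=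
  deriv (deriv (deriv y)) t + l1 / (1 - κ * l2) * (I1 y t + κ * deriv y t)
    + l2 / (1 - κ * l2) * deriv y t

theorem hasDerivAt_L2 (κ l1 l2 : ℝ) {y : ℝ → ℝ} (hy : ContDiff ℝ 3 y) (t : ℝ) :
    HasDerivAt (L2 κ l1 l2 y) (L3 κ l1 l2 y t) t := by
  have hy0 : Differentiable ℝ y := hy.differentiable (by norm_num)
  have hy1 : Continuous (deriv y) := hy.continuous_deriv (by norm_num)
  have hy2 : Differentiable ℝ (deriv (deriv y)) :=
    (hy.iterate_deriv' 1 2).differentiable one_ne_zero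
  have hI2 : HasDerivAt (fun t => I2 y t - κ * y t) (-I1 y t - κ * deriv y t) t := by
    rw [I2_eq_I1_I1]
    exact (hasDerivAt_I1 (continuous_I1 hy0.continuous) t).sub ((hy0 t).hasDerivAt.const_mul κ)
  refine (((hy2 t).hasDerivAt.sub (hI2.const_mul (l1 / (1 - κ * l2)))).sub
    ((hasDerivAt_I1 hy1 t).const_mul (l2 / (1 - κ * l2)))).congr_deriv ?_
  simp only [L3]
  ring

theorem hasDerivAt_L3 (κ l1 l2 : ℝ) {y : ℝ → ℝ} (hy : ContDiff ℝ 4 y) (t : ℝ) :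
    HasDerivAt (L3 κ l1 l2 y) (L4 κ l1 l2 y t) t := by
  have hy1 : Differentiable ℝ (deriv y) := (hy.iterate_deriv' 3 1).differentiable (by norm_num)
  have hy3 : Differentiable ℝ (deriv (deriv (deriv y))) :=
    (hy.iterate_deriv' 1 3).differentiable one_ne_zero
  have hI1 : HasDerivAt (fun t => I1 y t + κ * deriv y t) (-y t + κ * deriv (deriv y) t) t :=
    (hasDerivAt_I1 hy.continuous t).add ((hy1 t).hasDerivAt.const_mul κ)
  refine (((hy3 t).hasDerivAt.add (hI1.const_mul (l1 / (1 - κ * l2)))).add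
    ((hy1 t).hasDerivAt.const_mul (l2 / (1 - κ * l2)))).congr_deriv ?_
  simp only [L4, add_div, mul_div_right_comm κ l1]
  ring

theorem L2_one_eq_zero_iff {κ l1 l2 : ℝ} (hden : 1 - κ * l2 ≠ 0) (y : ℝ → ℝ) :
    L2 κ l1 l2 y 1 = 0 ↔ deriv (deriv y) 1 * (1 - κ * l2) + κ * l1 * y 1 = 0 := by
  simp only [L2, I2_eq_I1_I1, I1_one]
  field_simp
  constructor <;> intro h <;> linarith

theorem L3_one_eq_zero_iff {κ l1 l2 : ℝ} (hden : 1 - κ * l2 ≠ 0) (y : ℝ → ℝ) :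
    L3 κ l1 l2 y 1 = 0 ↔
      deriv (deriv (deriv y)) 1 * (1 - κ * l2) + (κ * l1 + l2) * deriv y 1 = 0 := by
  simp only [L3, I1_one]
  field_simp
  constructor <;> intro h <;> linarith

theorem stmt7_general (κ l1 l2 : ℝ) (hden : 1 - κ * l2 ≠ 0)
    (y : ℝ → ℝ) (hy : ContDiff ℝ 4 y) :
    (∀ t ∈ Icc (0:ℝ) 1, L2 κ l1 l2 y t = 0) ↔
      ((∀ t ∈ Icc (0:ℝ) 1, L4 κ l1 l2 y t = 0) ∧
        deriv (deriv y) 1 * (1 - κ * l2) + κ * l1 * y 1 = 0 ∧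
        deriv (deriv (deriv y)) 1 * (1 - κ * l2) + (κ * l1 + l2) * deriv y 1 = 0) := by
  rw [forall_Icc_eq_zero_iff_of_hasDerivWithinAt zero_lt_one
      fun t _ => (hasDerivAt_L2 κ l1 l2 (hy.of_le (by norm_num)) t).hasDerivWithinAt,
    forall_Icc_eq_zero_iff_of_hasDerivWithinAt zero_lt_one
      fun t _ => (hasDerivAt_L3 κ l1 l2 hy t).hasDerivWithinAt,
    L2_one_eq_zero_iff hden, L3_one_eq_zero_iff hden, and_assoc]
  exact and_congr_right' and_comm

/-- equivalence of the second-order integro-differential linearized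
boundary value problem and the fourth-order linearized boundary value problem. -/
theorem stmt7 (κ l1 l2 : ℝ) (hκ : 0 ≤ κ) (hden : 1 - κ * l2 ≠ 0)
    (y : ℝ → ℝ) (hy : ContDiff ℝ 4 y)
    (h0 : y 0 = 0) (h0' : deriv y 0 = 0) :
    (∀ t ∈ Icc (0:ℝ) 1, L2 κ l1 l2 y t = 0) ↔
      ((∀ t ∈ Icc (0:ℝ) 1, L4 κ l1 l2 y t = 0) ∧
        deriv (deriv y) 1 * (1 - κ * l2) + κ * l1 * y 1 = 0 ∧
        deriv (deriv (deriv y)) 1 * (1 - κ * l2) + (κ * l1 + l2) * deriv y 1 = 0) :=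
  stmt7_general κ l1 l2 hden y hy
end

section
/- Let κ ≥ 0 and λ0 = (λ01, λ02) with λ01 > 0 and 1 − κ λ02 > 0. Set p = (κλ01+λ02)/(1−κλ02), q = λ01/(1−κλ02), r01 = √( √(q + (p/2)²) + p/2 ), r02 = √( √(q + (p/2)²) − p/2 ), and suppose the denominator r01² sin r01 + r01 r02 sinh r02 + (κλ01/(1−κλ02))((r01/r02) sinh r02 − sin r01) is nonzero; define D = [r01² cos r01 + r02² cosh r02 + (κλ01/(1−κλ02))(cosh r02 − cos r01)] / [r01² sin r01 + r01 r02 sinh r02 + (κλ01/(1−κλ02))((r01/r02) sinh r02 − sin r01)]. If f(λ01, λ02) = 0, then for any C ≠ 0 the function y_l(t) = C( cos(r01 t) − cosh(r02 t) − D( sin(r01 t) − (r01/r02) sinh(r02 t) ) ) is a not-identically-zero solution of L⁴(λ0)y = 0 on [0,1] satisfying all four boundary conditions: y(0) = 0, y'(0) = 0, y''(1)(1−κλ02) + κλ01 y(1) = 0, and y'''(1)(1−κλ02) + (κλ01+λ02) y'(1) = 0. -/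
/-!
With `p`, `q` as in the statement, `r01²` and `-r02²` are the roots of `μ² - pμ - q`, so
`±i r01` and `±r02` are the characteristic roots of `L⁴(λ0)`, and every combination of
`cos (r01 t)`, `sin (r01 t)`, `cosh (r02 t)`, `sinh (r02 t)` solves the equation. The mode `y_l`
is the combination satisfying the two conditions at `t = 0`, the choice of `D` makes the third
condition hold, and the fourth one, multiplied by the denominator of `D`, becomes (up to the
factor `C r01`) the characteristic determinant of the boundary problem. Rewritten in terms of the
frequencies, `f` is `√q (1 - κλ02)²` times that determinant, so it vanishes on the interaction
curve. Nontriviality: a function vanishing on `[0, 1]` has `y''(0) = 0`, whereas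
`y_l''(0) = -C (r01² + r02²)`.
-/

open Set

/-- The frequency parameter `r1(λ1, λ2)`. -/
noncomputable def rr1 (κ l1 l2 : ℝ) : ℝ :=
  Real.sqrt (Real.sqrt (l1 / (1 - κ * l2) + ((κ * l1 + l2) / (2 * (1 - κ * l2))) ^ 2)
    + (κ * l1 + l2) / (2 * (1 - κ * l2)))

/-- The frequency parameter `r2(λ1, λ2)`. -/
noncomputable def rr2 (κ l1 l2 : ℝ) : ℝ :=
  Real.sqrt (Real.sqrt (l1 / (1 - κ * l2) + ((κ * l1 + l2) / (2 * (1 - κ * l2))) ^ 2)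
    - (κ * l1 + l2) / (2 * (1 - κ * l2)))

/-- The interaction-curve function `f(λ1, λ2)`. -/
noncomputable def fInt (κ l1 l2 : ℝ) : ℝ :=
  Real.sqrt (l1 / (1 - κ * l2)) *
    (2 * l1 + κ * l1 * (κ * l1 - l2)
      + (2 * l1 + l2 ^ 2 - κ * l1 * l2) * Real.cos (rr1 κ l1 l2) * Real.cosh (rr2 κ l1 l2)
      - Real.sqrt (l1 / (1 - κ * l2)) * (l2 - κ * (l1 - κ * l1 * l2 + l2 ^ 2)) *
          Real.sin (rr1 κ l1 l2) * Real.sinh (rr2 κ l1 l2))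

open Real

noncomputable def trigHyp (a b α β γ δ : ℝ) (t : ℝ) : ℝ :=
  α * cos (a * t) + β * sin (a * t) + γ * cosh (b * t) + δ * sinh (b * t)

section trigHyp

variable (a b α β γ δ : ℝ)

theorem hasDerivAt_trigHyp (t : ℝ) :
    HasDerivAt (trigHyp a b α β γ δ)
      (trigHyp a b (a * β) (-(a * α)) (b * δ) (b * γ) t) t := by
  have hA : HasDerivAt (fun t : ℝ => a * t) a t := by simpa using (hasDerivAt_id t).const_mul a
  have hB : HasDerivAt (fun t : ℝ => b * t) b t := by simpa using (hasDerivAt_id t).const_mul b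
  refine ((((hA.cos.const_mul α).add (hA.sin.const_mul β)).add (hB.cosh.const_mul γ)).add
    (hB.sinh.const_mul δ)).congr_deriv ?_
  simp only [trigHyp]
  ring

theorem deriv_trigHyp :
    deriv (trigHyp a b α β γ δ) = trigHyp a b (a * β) (-(a * α)) (b * δ) (b * γ) :=
  funext fun t => (hasDerivAt_trigHyp a b α β γ δ t).deriv

theorem continuous_trigHyp : Continuous (trigHyp a b α β γ δ) := by
  unfold trigHyp
  fun_prop

theorem trigHyp_fourth_order_ode (t : ℝ) :
    deriv (deriv (deriv (deriv (trigHyp a b α β γ δ)))) t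
      + (a ^ 2 - b ^ 2) * deriv (deriv (trigHyp a b α β γ δ)) t
      - a ^ 2 * b ^ 2 * trigHyp a b α β γ δ t = 0 := by
  simp only [deriv_trigHyp, trigHyp]
  ring

end trigHyp

theorem deriv_deriv_left_eq_zero_of_eqOn_Icc {f : ℝ → ℝ} {a b : ℝ} (hab : a < b)
    (hf : EqOn f 0 (Icc a b)) (hc : Continuous (deriv (deriv f))) :
    deriv (deriv f) a = 0 := by
  have hf' : EqOn f 0 (Ioo a b) := hf.mono Ioo_subset_Icc_self
  have h2 : EqOn (deriv (deriv f)) 0 (Ioo a b) := by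
    simpa using (hf'.deriv isOpen_Ioo).deriv isOpen_Ioo
  exact h2.of_subset_closure hc.continuousOn continuousOn_const Ioo_subset_Icc_self
    (closure_Ioo hab.ne).superset (left_mem_Icc.2 hab.le)

theorem biquadratic_roots {p q a b : ℝ} (hq : 0 < q)
    (ha : a = √(√(q + (p / 2) ^ 2) + p / 2)) (hb : b = √(√(q + (p / 2) ^ 2) - p / 2)) :
    0 < a ∧ 0 < b ∧ a ^ 2 - b ^ 2 = p ∧ a ^ 2 * b ^ 2 = q := by
  have hs : |p / 2| < √(q + (p / 2) ^ 2) := by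
    rw [← sqrt_sq_eq_abs]
    exact sqrt_lt_sqrt (by positivity) (by linarith)
  have h₁ := neg_abs_le (p / 2)
  have h₂ := le_abs_self (p / 2)
  have ha2 : a ^ 2 = √(q + (p / 2) ^ 2) + p / 2 := by rw [ha]; exact sq_sqrt (by linarith)
  have hb2 : b ^ 2 = √(q + (p / 2) ^ 2) - p / 2 := by rw [hb]; exact sq_sqrt (by linarith)
  refine ⟨ha ▸ sqrt_pos.2 (by linarith), hb ▸ sqrt_pos.2 (by linarith),
    by rw [ha2, hb2]; ring, ?_⟩
  rw [ha2, hb2]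
  linear_combination sq_sqrt (by positivity : 0 ≤ q + (p / 2) ^ 2)

section BucklingMode

variable (a b k C D : ℝ)

noncomputable def bucklingMode (t : ℝ) : ℝ :=
  C * (cos (a * t) - cosh (b * t) - D * (sin (a * t) - a / b * sinh (b * t)))

noncomputable def modeNum : ℝ :=
  a ^ 2 * cos a + b ^ 2 * cosh b + k * (cosh b - cos a)

noncomputable def modeDen : ℝ :=
  a ^ 2 * sin a + a * b * sinh b + k * (a / b * sinh b - sin a)

noncomputable def charDet : ℝ :=
  2 * (a ^ 2 * b ^ 2) + k * (a ^ 2 - b ^ 2) + a * b * (2 * k - (a ^ 2 - b ^ 2)) * sin a * sinh b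
    + ((a ^ 2 - b ^ 2) ^ 2 + 2 * (a ^ 2 * b ^ 2) - k * (a ^ 2 - b ^ 2)) * cos a * cosh b

theorem bucklingMode_eq_trigHyp :
    bucklingMode a b C D = trigHyp a b C (-(C * D)) (-C) (C * D * (a / b)) := by
  funext t
  simp only [bucklingMode, trigHyp]
  ring

theorem bucklingMode_zero : bucklingMode a b C D 0 = 0 := by
  simp [bucklingMode]

variable {b}

theorem deriv_bucklingMode_zero (hb : b ≠ 0) : deriv (bucklingMode a b C D) 0 = 0 := by
  simp only [bucklingMode_eq_trigHyp, deriv_trigHyp, trigHyp, mul_zero, cos_zero, sin_zero,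
    cosh_zero, sinh_zero]
  linear_combination C * D * mul_div_cancel₀ a hb

theorem deriv_deriv_bucklingMode_zero :
    deriv (deriv (bucklingMode a b C D)) 0 = -(C * (a ^ 2 + b ^ 2)) := by
  simp only [bucklingMode_eq_trigHyp, deriv_trigHyp, trigHyp, mul_zero, cos_zero, sin_zero,
    cosh_zero, sinh_zero]
  ring

theorem deriv_deriv_bucklingMode_one_add (hb : b ≠ 0) :
    deriv (deriv (bucklingMode a b C D)) 1 + k * bucklingMode a b C D 1
      = C * (D * modeDen a b k - modeNum a b k) := by
  simp only [bucklingMode_eq_trigHyp, deriv_trigHyp, trigHyp, modeDen, modeNum, mul_one]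
  field_simp
  ring

theorem charDet_eq (hb : b ≠ 0) :
    (b ^ 2 * sin a - a * b * sinh b) * modeDen a b k
      + modeNum a b k * (b ^ 2 * cos a + a ^ 2 * cosh b) = charDet a b k := by
  simp only [modeDen, modeNum, charDet]
  field_simp
  linear_combination (a ^ 2 * b ^ 2 - k * b ^ 2) * sin_sq_add_cos_sq a
    + (a ^ 2 * b ^ 2 + k * a ^ 2) * cosh_sq_sub_sinh_sq b

theorem modeDen_mul_deriv_deriv_deriv_bucklingMode_one_add (hb : b ≠ 0)
    (hD : D * modeDen a b k = modeNum a b k) :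
    modeDen a b k * (deriv (deriv (deriv (bucklingMode a b C D))) 1
      + (a ^ 2 - b ^ 2) * deriv (bucklingMode a b C D) 1) = C * a * charDet a b k := by
  rw [← charDet_eq a k hb]
  simp only [bucklingMode_eq_trigHyp, deriv_trigHyp, trigHyp, mul_one]
  linear_combination (C * a * (b ^ 2 * cos a + a ^ 2 * cosh b)) * hD
    + (modeDen a b k * C * D * a ^ 2 * cosh b) * mul_div_cancel₀ a hb

end BucklingMode

theorem rr1_eq (κ l1 l2 : ℝ) : rr1 κ l1 l2 = √(√(l1 / (1 - κ * l2)
    + ((κ * l1 + l2) / (1 - κ * l2) / 2) ^ 2) + (κ * l1 + l2) / (1 - κ * l2) / 2) := by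
  rw [rr1, div_div, mul_comm 2]

theorem rr2_eq (κ l1 l2 : ℝ) : rr2 κ l1 l2 = √(√(l1 / (1 - κ * l2)
    + ((κ * l1 + l2) / (1 - κ * l2) / 2) ^ 2) - (κ * l1 + l2) / (1 - κ * l2) / 2) := by
  rw [rr2, div_div, mul_comm 2]

theorem fInt_eq_charDet {κ l1 l2 : ℝ} (hl1 : 0 < l1) (hd : 0 < 1 - κ * l2) :
    fInt κ l1 l2 = √(l1 / (1 - κ * l2)) * (1 - κ * l2) ^ 2
      * charDet (rr1 κ l1 l2) (rr2 κ l1 l2) (κ * l1 / (1 - κ * l2)) := by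
  obtain ⟨ha, hb, hdiff, hprod⟩ :=
    biquadratic_roots (div_pos hl1 hd) (rr1_eq κ l1 l2) (rr2_eq κ l1 l2)
  have hsqrt : √(l1 / (1 - κ * l2)) = rr1 κ l1 l2 * rr2 κ l1 l2 := by
    rw [← hprod, ← mul_pow, sqrt_sq (by positivity)]
  rw [fInt, charDet, hdiff, hprod, hsqrt]
  field_simp
  ring

theorem stmt10_general (κ l01 l02 : ℝ) (hl1 : 0 < l01) (hl2 : 0 < 1 - κ * l02)
    (p q r01 r02 : ℝ)
    (hp : p = (κ * l01 + l02) / (1 - κ * l02))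
    (hq : q = l01 / (1 - κ * l02))
    (hr01 : r01 = Real.sqrt (Real.sqrt (q + (p / 2) ^ 2) + p / 2))
    (hr02 : r02 = Real.sqrt (Real.sqrt (q + (p / 2) ^ 2) - p / 2))
    (hden : r01 ^ 2 * Real.sin r01 + r01 * r02 * Real.sinh r02
      + κ * l01 / (1 - κ * l02) * (r01 / r02 * Real.sinh r02 - Real.sin r01) ≠ 0)
    (D : ℝ)
    (hD : D = (r01 ^ 2 * Real.cos r01 + r02 ^ 2 * Real.cosh r02
        + κ * l01 / (1 - κ * l02) * (Real.cosh r02 - Real.cos r01)) /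
      (r01 ^ 2 * Real.sin r01 + r01 * r02 * Real.sinh r02
        + κ * l01 / (1 - κ * l02) * (r01 / r02 * Real.sinh r02 - Real.sin r01)))
    (hf : fInt κ l01 l02 = 0)
    (C : ℝ) (hC : C ≠ 0) (yl : ℝ → ℝ)
    (hyl : yl = fun t => C * (Real.cos (r01 * t) - Real.cosh (r02 * t)
      - D * (Real.sin (r01 * t) - r01 / r02 * Real.sinh (r02 * t)))) :
    (∃ t ∈ Icc (0:ℝ) 1, yl t ≠ 0) ∧
    (∀ t ∈ Icc (0:ℝ) 1, L4 κ l01 l02 yl t = 0) ∧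
    yl 0 = 0 ∧ deriv yl 0 = 0 ∧
    deriv (deriv yl) 1 * (1 - κ * l02) + κ * l01 * yl 1 = 0 ∧
    deriv (deriv (deriv yl)) 1 * (1 - κ * l02) + (κ * l01 + l02) * deriv yl 1 = 0 := by
  have hd : 1 - κ * l02 ≠ 0 := hl2.ne'
  have hq0 : 0 < q := hq ▸ div_pos hl1 hl2
  obtain ⟨ha, hb, hdiff, hprod⟩ := biquadratic_roots hq0 hr01 hr02
  have hchar : charDet r01 r02 (κ * l01 / (1 - κ * l02)) = 0 := by
    have hfac := fInt_eq_charDet hl1 hl2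
    rw [hf, rr1_eq, rr2_eq, ← hp, ← hq, ← hr01, ← hr02] at hfac
    exact (mul_eq_zero.1 hfac.symm).resolve_left
      (mul_ne_zero (sqrt_ne_zero'.2 hq0) (pow_ne_zero 2 hd))
  have hDden : D * modeDen r01 r02 (κ * l01 / (1 - κ * l02))
      = modeNum r01 r02 (κ * l01 / (1 - κ * l02)) := by
    rw [hD]; exact div_mul_cancel₀ _ hden
  have hk : κ * l01 / (1 - κ * l02) * (1 - κ * l02) = κ * l01 := div_mul_cancel₀ _ hd
  obtain rfl : yl = bucklingMode r01 r02 C D := hyl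
  refine ⟨?_, fun t _ => ?_, bucklingMode_zero r01 r02 C D,
    deriv_bucklingMode_zero r01 C D hb.ne', ?_, ?_⟩
  · by_contra! hzero
    have h0 := deriv_deriv_left_eq_zero_of_eqOn_Icc zero_lt_one (fun t ht => hzero t ht)
      (by simpa only [bucklingMode_eq_trigHyp, deriv_trigHyp] using continuous_trigHyp ..)
    rw [deriv_deriv_bucklingMode_zero, neg_eq_zero] at h0
    exact mul_ne_zero hC (by positivity) h0
  · rw [L4, ← hp, ← hq, ← hdiff, ← hprod, bucklingMode_eq_trigHyp]
    exact trigHyp_fourth_order_ode ..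
  · have hbc := deriv_deriv_bucklingMode_one_add r01 (κ * l01 / (1 - κ * l02)) C D hb.ne'
    rw [hDden, sub_self, mul_zero] at hbc
    linear_combination (1 - κ * l02) * hbc - bucklingMode r01 r02 C D 1 * hk
  · have hbc := modeDen_mul_deriv_deriv_deriv_bucklingMode_one_add r01 (κ * l01 / (1 - κ * l02))
      C D hb.ne' hDden
    rw [hchar, mul_zero] at hbc
    have hp' : p * (1 - κ * l02) = κ * l01 + l02 := by rw [hp]; exact div_mul_cancel₀ _ hd
    rw [← hp', ← hdiff]
    linear_combination (1 - κ * l02) * (mul_eq_zero.1 hbc).resolve_left hden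

/-- on the interaction curve `f(λ01, λ02) = 0` the explicit buckling
mode `y_l` is a nontrivial solution of the linearized fourth-order boundary value
problem `L⁴(λ0)y = 0` with all four boundary conditions. -/
theorem stmt10 (κ l01 l02 : ℝ) (hκ : 0 ≤ κ) (hl1 : 0 < l01) (hl2 : 0 < 1 - κ * l02)
    (p q r01 r02 : ℝ)
    (hp : p = (κ * l01 + l02) / (1 - κ * l02))
    (hq : q = l01 / (1 - κ * l02))
    (hr01 : r01 = Real.sqrt (Real.sqrt (q + (p / 2) ^ 2) + p / 2))
    (hr02 : r02 = Real.sqrt (Real.sqrt (q + (p / 2) ^ 2) - p / 2))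
    (hden : r01 ^ 2 * Real.sin r01 + r01 * r02 * Real.sinh r02
      + κ * l01 / (1 - κ * l02) * (r01 / r02 * Real.sinh r02 - Real.sin r01) ≠ 0)
    (D : ℝ)
    (hD : D = (r01 ^ 2 * Real.cos r01 + r02 ^ 2 * Real.cosh r02
        + κ * l01 / (1 - κ * l02) * (Real.cosh r02 - Real.cos r01)) /
      (r01 ^ 2 * Real.sin r01 + r01 * r02 * Real.sinh r02
        + κ * l01 / (1 - κ * l02) * (r01 / r02 * Real.sinh r02 - Real.sin r01)))
    (hf : fInt κ l01 l02 = 0)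
    (C : ℝ) (hC : C ≠ 0) (yl : ℝ → ℝ)
    (hyl : yl = fun t => C * (Real.cos (r01 * t) - Real.cosh (r02 * t)
      - D * (Real.sin (r01 * t) - r01 / r02 * Real.sinh (r02 * t)))) :
    (∃ t ∈ Icc (0:ℝ) 1, yl t ≠ 0) ∧
    (∀ t ∈ Icc (0:ℝ) 1, L4 κ l01 l02 yl t = 0) ∧
    yl 0 = 0 ∧ deriv yl 0 = 0 ∧
    deriv (deriv yl) 1 * (1 - κ * l02) + κ * l01 * yl 1 = 0 ∧
    deriv (deriv (deriv yl)) 1 * (1 - κ * l02) + (κ * l01 + l02) * deriv yl 1 = 0 :=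
  stmt10_general κ l01 l02 hl1 hl2 p q r01 r02 hp hq hr01 hr02 hden D hD hf C hC yl hyl
end

section
/- Let κ ≥ 0 and λ0 = (λ01, λ02) with 1 − κ λ02 ≠ 0. Let y, q : [0,1] → ℝ be four times continuously differentiable, where y satisfies y(0) = 0, y'(0) = 0, y''(1)(1−κλ02) + κλ01 y(1) = 0, y'''(1)(1−κλ02) + (κλ01+λ02) y'(1) = 0, and q satisfies q(0) = 0, q'(0) = 0, q''(1) = 0, q'''(1) + (λ02/(1−κλ02)) q'(1) = 0. Then ∫₀¹ (L⁴(λ0)y)(t) · q(t) dt = ∫₀¹ y(t) · (L⁴(λ0)q)(t) dt. That is, the fourth-order operator with the given boundary conditions and its formal adjoint with the adjoint boundary conditions satisfy the adjointness identity with respect to the L² inner product on [0,1]. -/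
/-!
With `c` the coefficient of `y''` in `L⁴`, the zero-order terms cancel in `(L⁴y) q - y (L⁴q)`,
which is the derivative of the Lagrange bilinear concomitant
`y''' q - y'' q' + y' q'' - y q''' + c (y' q - y q')`, so the adjointness defect is the jump of
the concomitant over `[0,1]`. It vanishes at `0` because `y, y', q, q'` do, and at `1` the
direct conditions `y''' = -c y'`, `y'' = -κλ₀₁ y / (1 - κλ₀₂)` and the adjoint conditions
`q'' = 0`, `q''' = -λ₀₂ q' / (1 - κλ₀₂)` cancel it term by term.
-/

open Set

noncomputable def lagrangeConcomitant (c : ℝ) (y q : ℝ → ℝ) (t : ℝ) : ℝ :=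
  deriv (deriv (deriv y)) t * q t - deriv (deriv y) t * deriv q t
    + deriv y t * deriv (deriv q) t - y t * deriv (deriv (deriv q)) t
    + c * (deriv y t * q t - y t * deriv q t)

lemma ContDiff.differentiable_iterate_deriv {n : ℕ} {f : ℝ → ℝ} (hf : ContDiff ℝ n f)
    {k : ℕ} (hk : k < n) : Differentiable ℝ (deriv^[k] f) :=
  iteratedDeriv_eq_iterate (n := k) (f := f) (𝕜 := ℝ) ▸
    hf.differentiable_iteratedDeriv k (by exact_mod_cast hk)

lemma ContDiff.continuous_L4 {y : ℝ → ℝ} (hy : ContDiff ℝ 4 y) (κ l1 l2 : ℝ) :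
    Continuous (L4 κ l1 l2 y) := by
  have h4 : Continuous (deriv^[4] y) :=
    iteratedDeriv_eq_iterate (n := 4) (f := y) (𝕜 := ℝ) ▸ hy.continuous_iteratedDeriv 4 le_rfl
  have h2 : Continuous (deriv^[2] y) := (hy.differentiable_iterate_deriv (by norm_num)).continuous
  simp only [Function.iterate_succ, Function.iterate_zero, Function.comp_apply, id] at h4 h2
  have h0 : Continuous y := hy.continuous
  unfold L4
  fun_prop

lemma hasDerivAt_lagrangeConcomitant {y q : ℝ → ℝ} (hy : ContDiff ℝ 4 y) (hq : ContDiff ℝ 4 q)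
    (κ l1 l2 t : ℝ) :
    HasDerivAt (lagrangeConcomitant ((κ * l1 + l2) / (1 - κ * l2)) y q)
      (L4 κ l1 l2 y t * q t - y t * L4 κ l1 l2 q t) t := by
  have dy (k : ℕ) (hk : k < 4) : HasDerivAt (deriv^[k] y) (deriv^[k + 1] y t) t :=
    ((hy.differentiable_iterate_deriv hk) t).hasDerivAt.congr_deriv
      (Function.iterate_succ_apply' deriv k y ▸ rfl)
  have dq (k : ℕ) (hk : k < 4) : HasDerivAt (deriv^[k] q) (deriv^[k + 1] q t) t :=
    ((hq.differentiable_iterate_deriv hk) t).hasDerivAt.congr_deriv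
      (Function.iterate_succ_apply' deriv k q ▸ rfl)
  have h := ((((dy 3 (by norm_num)).mul (dq 0 (by norm_num))).sub
      ((dy 2 (by norm_num)).mul (dq 1 (by norm_num)))).add
      ((dy 1 (by norm_num)).mul (dq 2 (by norm_num)))).sub
      ((dy 0 (by norm_num)).mul (dq 3 (by norm_num))) |>.add
      ((((dy 1 (by norm_num)).mul (dq 0 (by norm_num))).sub
        ((dy 0 (by norm_num)).mul (dq 1 (by norm_num)))).const_mul ((κ * l1 + l2) / (1 - κ * l2)))
  refine h.congr_deriv ?_
  simp only [L4, Function.iterate_succ, Function.iterate_zero, Function.comp_apply, id]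
  ring

theorem integral_L4_mul_sub_integral_mul_L4 {y q : ℝ → ℝ} (hy : ContDiff ℝ 4 y)
    (hq : ContDiff ℝ 4 q) (κ l1 l2 a b : ℝ) :
    (∫ t in a..b, L4 κ l1 l2 y t * q t) - ∫ t in a..b, y t * L4 κ l1 l2 q t =
      lagrangeConcomitant ((κ * l1 + l2) / (1 - κ * l2)) y q b -
        lagrangeConcomitant ((κ * l1 + l2) / (1 - κ * l2)) y q a := by
  have hLy := hy.continuous_L4 κ l1 l2
  have hLq := hq.continuous_L4 κ l1 l2
  have hy0 := hy.continuous
  have hq0 := hq.continuous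
  rw [← intervalIntegral.integral_sub (by apply Continuous.intervalIntegrable; fun_prop)
    (by apply Continuous.intervalIntegrable; fun_prop)]
  exact intervalIntegral.integral_eq_sub_of_hasDerivAt
    (fun t _ ↦ hasDerivAt_lagrangeConcomitant hy hq κ l1 l2 t)
    (by apply Continuous.intervalIntegrable; fun_prop)

lemma lagrangeConcomitant_eq_zero_of_clamped (c : ℝ) {y q : ℝ → ℝ} {a : ℝ}
    (hy : y a = 0) (hy' : deriv y a = 0) (hq : q a = 0) (hq' : deriv q a = 0) :
    lagrangeConcomitant c y q a = 0 := by
  simp [lagrangeConcomitant, hy, hy', hq, hq']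

lemma lagrangeConcomitant_eq_zero_of_adjoint_boundary_conditions {κ l01 l02 b : ℝ}
    (hden : 1 - κ * l02 ≠ 0) {y q : ℝ → ℝ}
    (hy : deriv (deriv y) b * (1 - κ * l02) + κ * l01 * y b = 0)
    (hy' : deriv (deriv (deriv y)) b * (1 - κ * l02) + (κ * l01 + l02) * deriv y b = 0)
    (hq : deriv (deriv q) b = 0)
    (hq' : deriv (deriv (deriv q)) b + l02 / (1 - κ * l02) * deriv q b = 0) :
    lagrangeConcomitant ((κ * l01 + l02) / (1 - κ * l02)) y q b = 0 := by
  have e2 : deriv (deriv y) b = -(κ * l01) * y b / (1 - κ * l02) := by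
    field_simp; linarith
  have e3 : deriv (deriv (deriv y)) b = -(κ * l01 + l02) * deriv y b / (1 - κ * l02) := by
    field_simp; linarith
  have e3q : deriv (deriv (deriv q)) b = -(l02 / (1 - κ * l02)) * deriv q b := by
    linarith
  simp only [lagrangeConcomitant, e2, e3, e3q, hq]
  field_simp
  ring

theorem stmt13_general (κ l01 l02 : ℝ) (hden : 1 - κ * l02 ≠ 0)
    (y q : ℝ → ℝ) (hy : ContDiff ℝ 4 y) (hq : ContDiff ℝ 4 q)
    (hy0 : y 0 = 0) (hy0' : deriv y 0 = 0)
    (hy1 : deriv (deriv y) 1 * (1 - κ * l02) + κ * l01 * y 1 = 0)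
    (hy1' : deriv (deriv (deriv y)) 1 * (1 - κ * l02) + (κ * l01 + l02) * deriv y 1 = 0)
    (hq0 : q 0 = 0) (hq0' : deriv q 0 = 0)
    (hq1 : deriv (deriv q) 1 = 0)
    (hq1' : deriv (deriv (deriv q)) 1 + l02 / (1 - κ * l02) * deriv q 1 = 0) :
    ∫ t in (0:ℝ)..1, L4 κ l01 l02 y t * q t = ∫ t in (0:ℝ)..1, y t * L4 κ l01 l02 q t := by
  have green := integral_L4_mul_sub_integral_mul_L4 hy hq κ l01 l02 0 1
  rw [lagrangeConcomitant_eq_zero_of_adjoint_boundary_conditions hden hy1 hy1' hq1 hq1',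
    lagrangeConcomitant_eq_zero_of_clamped _ hy0 hy0' hq0 hq0', sub_zero] at green
  exact sub_eq_zero.mp green

/-- adjointness identity `⟨L⁴(λ0)y, q⟩ = ⟨y, L⁴(λ0)q⟩` in the `L²([0,1])`
inner product, for `y` satisfying the direct boundary conditions and `q` satisfying the
adjoint boundary conditions. -/
theorem stmt13 (κ l01 l02 : ℝ) (hκ : 0 ≤ κ) (hden : 1 - κ * l02 ≠ 0)
    (y q : ℝ → ℝ) (hy : ContDiff ℝ 4 y) (hq : ContDiff ℝ 4 q)
    (hy0 : y 0 = 0) (hy0' : deriv y 0 = 0)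
    (hy1 : deriv (deriv y) 1 * (1 - κ * l02) + κ * l01 * y 1 = 0)
    (hy1' : deriv (deriv (deriv y)) 1 * (1 - κ * l02) + (κ * l01 + l02) * deriv y 1 = 0)
    (hq0 : q 0 = 0) (hq0' : deriv q 0 = 0)
    (hq1 : deriv (deriv q) 1 = 0)
    (hq1' : deriv (deriv (deriv q)) 1 + l02 / (1 - κ * l02) * deriv q 1 = 0) :
    ∫ t in (0:ℝ)..1, L4 κ l01 l02 y t * q t = ∫ t in (0:ℝ)..1, y t * L4 κ l01 l02 q t :=
  stmt13_general κ l01 l02 hden y q hy hq hy0 hy0' hy1 hy1' hq0 hq0' hq1 hq1'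
end
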